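/- arXiv:2307.01340 — 3 statements merged into one kernel-verified Lean document; each statement's English description precedes it below -/
import Mathlib

section
/- Let s ∈ {1,…,N}. The Miura map M_{0→s} : Ω × ℝⁿ × ℝᴺ → Ω × ℝⁿ × ℝᴺ is a bijection, and its inverse sends (λ̄, μ̄, c̄) to (λ, μ, c) with λ_i = λ̄_i, μ_i = λ̄_i^{s} μ̄_i (i = 1,…,n), c_i = h_{s−i+1}^{(s)}(λ̄, μ̄, c̄) for i = 1,…,s, and c_i = c̄_i for i = s+1,…,N. -/
open Finset Function

noncomputable section

/-- Evaluation of a Laurent polynomial `p ∈ ℝ[λ,λ⁻¹]` at a real number `x`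
(meaningful for `x ≠ 0`, using `zpow`). -/
def leval (p : LaurentPolynomial ℝ) (x : ℝ) : ℝ :=
  Finsupp.sum p.coeff fun k a => a * x ^ k

/-- The open set `Ω ⊂ ℝⁿ` of tuples with nonzero, pairwise distinct entries. -/
def Omega (n : ℕ) : Set (Fin n → ℝ) :=
  {lam | (∀ i, lam i ≠ 0) ∧ Function.Injective lam}

/-- `H` is the family of curve-`s` Stäckel Hamiltonians: it satisfies, at every point of
`Ω × ℝⁿ × ℝᴺ`, the curve-`s` separation relations
`σ(λᵢ)λᵢ⁻ˢ + Σ_{k=s+1}^{N} c_k λᵢ^{n+k-s-1} + Σ_{q=1}^{n} h_q λᵢ^{n-q}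
  + Σ_{k=1}^{s} c_k λᵢ^{k-s-1} = f(λᵢ) λᵢˢ μᵢ²`.
Here everything is 0-based: `H lam mu c q` is `h_{q+1}`, `c j` is `c_{j+1}`,
`lam i` is `λ_{i+1}`.  (These relations determine `H` uniquely on `Ω × ℝⁿ × ℝᴺ`,
by invertibility of the Vandermonde matrix.) -/
def SepSol (n N : ℕ) (f σ : LaurentPolynomial ℝ) (s : ℕ)
    (H : (Fin n → ℝ) → (Fin n → ℝ) → (Fin N → ℝ) → Fin n → ℝ) : Prop :=
  ∀ lam ∈ Omega n, ∀ (mu : Fin n → ℝ) (c : Fin N → ℝ), ∀ i : Fin n,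
    leval σ (lam i) * lam i ^ (-(s : ℤ))
      + (∑ j : Fin N,
          if s ≤ (j : ℕ) then c j * lam i ^ ((n : ℤ) + (j : ℕ) - (s : ℕ))
          else c j * lam i ^ (((j : ℕ) : ℤ) - (s : ℕ)))
      + (∑ q : Fin n, H lam mu c q * lam i ^ ((n : ℤ) - 1 - (q : ℕ)))
      = leval f (lam i) * lam i ^ (s : ℤ) * mu i ^ 2

/-- The extended phase space `ℝⁿ × ℝⁿ × ℝᴺ` (coordinates `(λ, μ, c)`). -/
abbrev PhaseP (n N : ℕ) := (Fin n → ℝ) × (Fin n → ℝ) × (Fin N → ℝ)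

/-- The Miura map `M_{r→s}` on the extended phase space (for `r ≤ s ≤ N ≤ n`), built from
the curve-`r` Hamiltonians `Hr`:  `λ̄ᵢ = λᵢ`, `μ̄ᵢ = λᵢ^{r-s} μᵢ`,
`c̄ᵢ = h^{(r)}_{n+r-i+1}` for `i = r+1,…,s` and `c̄ᵢ = cᵢ` otherwise (1-based indexing;
internally 0-based).  For `r = 0` this is `M_{0→s}`, and `M_{0→0}` is the identity. -/
def Mrs (n N : ℕ) (hn : 1 ≤ n) (r s : ℕ)
    (Hr : (Fin n → ℝ) → (Fin n → ℝ) → (Fin N → ℝ) → Fin n → ℝ)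
    (x : PhaseP n N) : PhaseP n N :=
  (x.1, fun i => x.1 i ^ ((r : ℤ) - (s : ℕ)) * x.2.1 i,
    fun j : Fin N =>
      if h : r ≤ (j : ℕ) ∧ (j : ℕ) < s then
        Hr x.1 x.2.1 x.2.2 ⟨n + r - (j : ℕ) - 1, by obtain ⟨h1, h2⟩ := h; omega⟩
      else x.2.2 j)

/-!
Write the separation relations as `σ(λᵢ)λᵢ⁻ˢ + Σₖ vₖ λᵢ^{eₛ(k)} = f(λᵢ)λᵢˢμᵢ²` for the
coefficient vector `v = (c, h) ∈ ℝ^{N ⊕ n}`. Multiplying the curve-`0` relations by `λᵢ⁻ˢ`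
gives the curve-`s` relations for `μ̄ = λ⁻ˢμ` and a coordinate permutation of `v`, because
`e₀ - s` and `eₛ` enumerate the same exponents `-s, …, n + N - s - 1`. This permutation is
exactly how `M_{0→s}` and the stated inverse act on the `c`-coordinates together with the
Hamiltonians. Since the relations determine the Hamiltonians uniquely (Vandermonde), the graph
of `H₀` is carried onto the graph of `Hₛ`, and the two maps are mutually inverse.
-/

theorem eq_of_forall_index_sum_mul_zpow_rev_eq {K : Type*} [Field K] {n : ℕ} {x : Fin n → K}
    (hx : Injective x) {a b : Fin n → K}
    (hab : ∀ i, ∑ q, a q * x i ^ ((n : ℤ) - 1 - (q : ℕ))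
      = ∑ q, b q * x i ^ ((n : ℤ) - 1 - (q : ℕ))) :
    a = b := by
  have hrev : (a - b) ∘ Fin.rev = 0 := by
    refine Matrix.eq_zero_of_forall_index_sum_mul_pow_eq_zero hx fun i => ?_
    rw [← Equiv.sum_comp Fin.revPerm]
    simp only [Fin.revPerm_apply, comp_apply, Fin.rev_rev, Pi.sub_apply, sub_mul, sum_sub_distrib,
      sub_eq_zero]
    convert hab i using 2 with q _ q _ <;>
    · rw [Fin.val_rev, ← zpow_natCast]
      congr 2
      omega
  funext q
  simpa [sub_eq_zero] using congrFun hrev q.rev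

def sepExponent (n N s : ℕ) : Fin N ⊕ Fin n → ℤ
  | .inl j => if s ≤ (j : ℕ) then (n : ℤ) + (j : ℕ) - (s : ℕ) else ((j : ℕ) : ℤ) - (s : ℕ)
  | .inr q => (n : ℤ) - 1 - (q : ℕ)

/-- The curve-`s` separation relations, for the coefficient vector `v = (c, h)`. -/
def SepRel (n N : ℕ) (f σ : LaurentPolynomial ℝ) (s : ℕ) (lam mu : Fin n → ℝ)
    (v : Fin N ⊕ Fin n → ℝ) : Prop :=
  ∀ i, leval σ (lam i) * lam i ^ (-(s : ℤ)) + ∑ k, v k * lam i ^ sepExponent n N s k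
    = leval f (lam i) * lam i ^ (s : ℤ) * mu i ^ 2

theorem sepSol_iff {n N : ℕ} {f σ : LaurentPolynomial ℝ} {s : ℕ}
    {H : (Fin n → ℝ) → (Fin n → ℝ) → (Fin N → ℝ) → Fin n → ℝ} :
    SepSol n N f σ s H ↔
      ∀ lam ∈ Omega n, ∀ mu c, SepRel n N f σ s lam mu (Sum.elim c (H lam mu c)) := by
  simp only [SepSol, SepRel, Fintype.sum_sum_type, Sum.elim_inl, Sum.elim_inr, sepExponent,
    pow_ite, mul_ite, add_assoc]

theorem SepRel.inr_unique {n N : ℕ} {f σ : LaurentPolynomial ℝ} {s : ℕ} {lam mu : Fin n → ℝ}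
    (hlam : Injective lam) {c : Fin N → ℝ} {h h' : Fin n → ℝ}
    (hrel : SepRel n N f σ s lam mu (Sum.elim c h))
    (hrel' : SepRel n N f σ s lam mu (Sum.elim c h')) : h = h' :=
  eq_of_forall_index_sum_mul_zpow_rev_eq hlam fun i => by
    have := (hrel i).trans (hrel' i).symm
    simpa [Fintype.sum_sum_type, sepExponent] using this

theorem SepSol.eq_of_sepRel {n N : ℕ} {f σ : LaurentPolynomial ℝ} {s : ℕ}
    {H : (Fin n → ℝ) → (Fin n → ℝ) → (Fin N → ℝ) → Fin n → ℝ} (hH : SepSol n N f σ s H)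
    {lam : Fin n → ℝ} (hlam : lam ∈ Omega n) {mu : Fin n → ℝ} {v : Fin N ⊕ Fin n → ℝ}
    (hv : SepRel n N f σ s lam mu v) : Sum.elim (v ∘ Sum.inl) (H lam mu (v ∘ Sum.inl)) = v := by
  conv_rhs => rw [← Sum.elim_comp_inl_inr v]
  congr 1
  refine SepRel.inr_unique hlam.2 (sepSol_iff.mp hH lam hlam mu _) ?_
  rwa [Sum.elim_comp_inl_inr]

/-- `v ∘ miuraPerm` is the coefficient vector `(c̄, h^{(s)})` of the Miura image of
`v = (c, h^{(0)})`. -/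
def miuraPerm (n N s : ℕ) (hsN : s ≤ N) (hNn : N ≤ n) : Equiv.Perm (Fin N ⊕ Fin n) where
  toFun
    | .inl j => if (j : ℕ) < s then .inr ⟨n - j - 1, by omega⟩ else .inl j
    | .inr q => if h : (q : ℕ) < s then .inl ⟨s - 1 - q, by omega⟩ else .inr ⟨q - s, by omega⟩
  invFun
    | .inl j => if h : (j : ℕ) < s then .inr ⟨s - j - 1, by omega⟩ else .inl j
    | .inr q => if h : (q : ℕ) < n - s then .inr ⟨q + s, by omega⟩ else .inl ⟨n - 1 - q, by omega⟩
  left_inv := by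
    rintro (j | q) <;> dsimp only <;> split_ifs <;> dsimp only <;> split_ifs <;>
      (try simp only [Sum.inl.injEq, Sum.inr.injEq, Fin.ext_iff]) <;> omega
  right_inv := by
    rintro (j | q) <;> dsimp only <;> split_ifs <;> dsimp only <;> split_ifs <;>
      (try simp only [Sum.inl.injEq, Sum.inr.injEq, Fin.ext_iff]) <;> omega

theorem sepExponent_miuraPerm {n N s : ℕ} (hsN : s ≤ N) (hNn : N ≤ n) (k : Fin N ⊕ Fin n) :
    sepExponent n N 0 (miuraPerm n N s hsN hNn k) - s = sepExponent n N s k := by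
  rcases k with j | q <;> simp only [miuraPerm, Equiv.coe_fn_mk] <;> split_ifs <;>
    simp_all [sepExponent] <;> omega

theorem sum_mul_zpow_sepExponent_miuraPerm {n N s : ℕ} (hsN : s ≤ N) (hNn : N ≤ n) {x : ℝ}
    (hx : x ≠ 0) (v : Fin N ⊕ Fin n → ℝ) :
    ∑ k, v (miuraPerm n N s hsN hNn k) * x ^ sepExponent n N s k
      = x ^ (-(s : ℤ)) * ∑ k, v k * x ^ sepExponent n N 0 k := by
  simp_rw [← sepExponent_miuraPerm hsN hNn, sub_eq_add_neg, zpow_add₀ hx, mul_sum]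
  rw [← Equiv.sum_comp (miuraPerm n N s hsN hNn)
    fun k => x ^ (-(s : ℤ)) * (v k * x ^ sepExponent n N 0 k)]
  exact sum_congr rfl fun k _ => by ring

theorem sepRel_comp_miuraPerm_iff {n N : ℕ} {f σ : LaurentPolynomial ℝ} {s : ℕ} (hsN : s ≤ N)
    (hNn : N ≤ n) {lam : Fin n → ℝ} (hlam : ∀ i, lam i ≠ 0) (mu : Fin n → ℝ)
    (v : Fin N ⊕ Fin n → ℝ) :
    SepRel n N f σ s lam (fun i => lam i ^ (-(s : ℤ)) * mu i) (v ∘ miuraPerm n N s hsN hNn) ↔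
      SepRel n N f σ 0 lam mu v := by
  refine forall_congr' fun i => ?_
  have hx := hlam i
  have hrhs : leval f (lam i) * lam i ^ (s : ℤ) * (lam i ^ (-(s : ℤ)) * mu i) ^ 2
      = lam i ^ (-(s : ℤ)) * (leval f (lam i) * mu i ^ 2) := by
    have hpow : lam i ^ (s : ℤ) * (lam i ^ (-(s : ℤ))) ^ 2 = lam i ^ (-(s : ℤ)) := by
      rw [sq, ← zpow_add₀ hx, ← zpow_add₀ hx]
      congr 1
      ring
    linear_combination leval f (lam i) * mu i ^ 2 * hpow
  simp only [comp_apply, sum_mul_zpow_sepExponent_miuraPerm hsN hNn hx, hrhs, Nat.cast_zero,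
    neg_zero, zpow_zero, mul_one, ← mul_add, mul_comm _ (lam i ^ (-(s : ℤ)))]
  exact mul_right_inj' (zpow_ne_zero _ hx)

def miuraInv (n N s : ℕ) (hsN : s ≤ N) (hNn : N ≤ n)
    (Hs : (Fin n → ℝ) → (Fin n → ℝ) → (Fin N → ℝ) → Fin n → ℝ) (x : PhaseP n N) : PhaseP n N :=
  (x.1, fun i => x.1 i ^ (s : ℤ) * x.2.1 i,
    fun j : Fin N =>
      if h1 : (j : ℕ) < s then Hs x.1 x.2.1 x.2.2 ⟨s - (j : ℕ) - 1, by omega⟩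
      else x.2.2 j)

theorem mrs_zero_apply {n N s : ℕ} (hn : 1 ≤ n) (hsN : s ≤ N) (hNn : N ≤ n)
    (H : (Fin n → ℝ) → (Fin n → ℝ) → (Fin N → ℝ) → Fin n → ℝ) (lam mu : Fin n → ℝ)
    (c : Fin N → ℝ) :
    Mrs n N hn 0 s H (lam, mu, c) = (lam, fun i => lam i ^ (-(s : ℤ)) * mu i,
      (Sum.elim c (H lam mu c) ∘ miuraPerm n N s hsN hNn) ∘ Sum.inl) := by
  simp only [Mrs, Nat.cast_zero, zero_sub, zero_le, true_and, add_zero, Prod.mk.injEq]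
  funext j
  simp only [comp_apply, miuraPerm, Equiv.coe_fn_mk]
  split_ifs <;> rfl

theorem miuraInv_apply {n N s : ℕ} (hsN : s ≤ N) (hNn : N ≤ n)
    (H : (Fin n → ℝ) → (Fin n → ℝ) → (Fin N → ℝ) → Fin n → ℝ) (lam mu : Fin n → ℝ)
    (c : Fin N → ℝ) :
    miuraInv n N s hsN hNn H (lam, mu, c) = (lam, fun i => lam i ^ (s : ℤ) * mu i,
      (Sum.elim c (H lam mu c) ∘ (miuraPerm n N s hsN hNn).symm) ∘ Sum.inl) := by
  simp only [miuraInv, Prod.mk.injEq, true_and]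
  funext j
  simp only [comp_apply, miuraPerm, Equiv.coe_fn_symm_mk]
  split_ifs <;> rfl

section Inverse

variable {n N : ℕ} {f σ : LaurentPolynomial ℝ} {s : ℕ} (hn : 1 ≤ n) (hsN : s ≤ N) (hNn : N ≤ n)
  {H0 Hs : (Fin n → ℝ) → (Fin n → ℝ) → (Fin N → ℝ) → Fin n → ℝ}

theorem miuraInv_mrs_zero (hH0 : SepSol n N f σ 0 H0) (hHs : SepSol n N f σ s Hs)
    {x : PhaseP n N} (hx : x.1 ∈ Omega n) :
    miuraInv n N s hsN hNn Hs (Mrs n N hn 0 s H0 x) = x := by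
  obtain ⟨lam, mu, c⟩ := x
  have hv := sepSol_iff.mp hH0 lam hx mu c
  have hHs_eq := hHs.eq_of_sepRel hx ((sepRel_comp_miuraPerm_iff hsN hNn hx.1 mu _).mpr hv)
  rw [mrs_zero_apply hn hsN hNn, miuraInv_apply hsN hNn, hHs_eq]
  simp only [comp_assoc, Equiv.self_comp_symm, comp_id, Sum.elim_comp_inl, Prod.mk.injEq,
    true_and, and_true]
  funext i
  rw [← mul_assoc, ← zpow_add₀ (hx.1 i), add_neg_cancel, zpow_zero, one_mul]

theorem mrs_zero_miuraInv (hH0 : SepSol n N f σ 0 H0) (hHs : SepSol n N f σ s Hs)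
    {x : PhaseP n N} (hx : x.1 ∈ Omega n) :
    Mrs n N hn 0 s H0 (miuraInv n N s hsN hNn Hs x) = x := by
  obtain ⟨lam, mub, cb⟩ := x
  set v := Sum.elim cb (Hs lam mub cb) ∘ (miuraPerm n N s hsN hNn).symm
  have hmub : (fun i => lam i ^ (-(s : ℤ)) * (lam i ^ (s : ℤ) * mub i)) = mub := by
    funext i
    rw [← mul_assoc, ← zpow_add₀ (hx.1 i), neg_add_cancel, zpow_zero, one_mul]
  have hw : SepRel n N f σ s lam mub (v ∘ miuraPerm n N s hsN hNn) := by
    simpa only [v, comp_assoc, Equiv.symm_comp_self, comp_id] using sepSol_iff.mp hHs lam hx mub cb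
  rw [← hmub, sepRel_comp_miuraPerm_iff hsN hNn hx.1] at hw
  have hH0_eq := hH0.eq_of_sepRel hx hw
  rw [miuraInv_apply hsN hNn, mrs_zero_apply hn hsN hNn, hH0_eq]
  simp only [v, hmub, comp_assoc, Equiv.symm_comp_self, comp_id, Sum.elim_comp_inl]

end Inverse

/-- the Miura map `M_{0→s}` is a bijection of `Ω × ℝⁿ × ℝᴺ` onto itself, and
its inverse is `(λ̄, μ̄, c̄) ↦ (λ, μ, c)` with `λ_i = λ̄_i`, `μ_i = λ̄_iˢ μ̄_i`,
`c_i = h^{(s)}_{s-i+1}(λ̄, μ̄, c̄)` for `i = 1, …, s` and `c_i = c̄_i` for `i = s+1, …, N`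
(1-based; 0-based below). -/
theorem miura_map_bijective_with_explicit_inverse
    (n N : ℕ) (hn : 1 ≤ n) (hNn : N ≤ n)
    (f σ : LaurentPolynomial ℝ) (s : ℕ) (hsN : s ≤ N)
    (H0 Hs : (Fin n → ℝ) → (Fin n → ℝ) → (Fin N → ℝ) → Fin n → ℝ)
    (hH0 : SepSol n N f σ 0 H0) (hHs : SepSol n N f σ s Hs) :
    Set.BijOn (Mrs n N hn 0 s H0)
        {x : PhaseP n N | x.1 ∈ Omega n} {x : PhaseP n N | x.1 ∈ Omega n}
    ∧ Set.InvOn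
        (fun x : PhaseP n N =>
          (x.1, fun i => x.1 i ^ (s : ℤ) * x.2.1 i,
            fun j : Fin N =>
              if h1 : (j : ℕ) < s then Hs x.1 x.2.1 x.2.2 ⟨s - (j : ℕ) - 1, by omega⟩
              else x.2.2 j))
        (Mrs n N hn 0 s H0)
        {x : PhaseP n N | x.1 ∈ Omega n} {x : PhaseP n N | x.1 ∈ Omega n} := by
  have hinv : Set.InvOn (miuraInv n N s hsN hNn Hs) (Mrs n N hn 0 s H0)
      {x : PhaseP n N | x.1 ∈ Omega n} {x : PhaseP n N | x.1 ∈ Omega n} :=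
    ⟨fun _ hx => miuraInv_mrs_zero hn hsN hNn hH0 hHs hx,
      fun _ hx => mrs_zero_miuraInv hn hsN hNn hH0 hHs hx⟩
  exact ⟨hinv.bijOn (fun _ hx => hx) (fun _ hx => hx), hinv⟩
end
end

section
/- (Identity (A2) of the paper.) Let s ∈ {1,…,N}. For every (λ, μ, c) ∈ Ω × ℝⁿ × ℝᴺ, every r ∈ {1,…,n} and every p ∈ {1,…,n}: (∂h_r^{(s)}/∂μ_p)( M_{0→s}(λ, μ, c) ) = (∂h_r/∂μ_p)(λ, μ, c). -/
open Finset Function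

noncomputable section

/-- Partial derivative `∂h_r/∂λ_p`. -/
def pLam {n N : ℕ} (H : (Fin n → ℝ) → (Fin n → ℝ) → (Fin N → ℝ) → Fin n → ℝ)
    (lam mu : Fin n → ℝ) (c : Fin N → ℝ) (r p : Fin n) : ℝ :=
  deriv (fun t => H (Function.update lam p t) mu c r) (lam p)

/-- Partial derivative `∂h_r/∂μ_p`. -/
def pMu {n N : ℕ} (H : (Fin n → ℝ) → (Fin n → ℝ) → (Fin N → ℝ) → Fin n → ℝ)
    (lam mu : Fin n → ℝ) (c : Fin N → ℝ) (r p : Fin n) : ℝ :=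
  deriv (fun t => H lam (Function.update mu p t) c r) (mu p)

/-!
The separation relations of every curve `s` have the same coefficient matrix `V = (λᵢ^{n-1-q})`,
a column-reversed Vandermonde matrix, and only their right-hand side `f(λᵢ) λᵢˢ μᵢ²` involves `μ`.
Hence `∂h_r^{(s)}/∂μ_p = 2 (V⁻¹)_{rp} f(λ_p) λ_pˢ μ_p`, and the rescaling `μ̄_p = λ_p^{-s} μ_p` of
the Miura map cancels the factor `λ_pˢ`; the `c`-coordinates it changes do not enter this formula.
-/

open scoped Matrix

def sepMatrix {n : ℕ} (lam : Fin n → ℝ) : Matrix (Fin n) (Fin n) ℝ :=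
  Matrix.of fun i q : Fin n => lam i ^ ((n : ℤ) - 1 - (q : ℕ))

theorem sepMatrix_eq_vandermonde_submatrix {n : ℕ} (lam : Fin n → ℝ) :
    sepMatrix lam = (Matrix.vandermonde lam).submatrix id Fin.revPerm := by
  ext i q
  have hq : (n : ℤ) - 1 - (q : ℕ) = ((n - 1 - (q : ℕ) : ℕ) : ℤ) := by omega
  simp only [sepMatrix, Matrix.of_apply, hq, zpow_natCast, Matrix.submatrix_apply, id,
    Matrix.vandermonde_apply, Fin.revPerm_apply, Fin.val_rev]
  congr 1
  omega

theorem isUnit_det_sepMatrix {n : ℕ} {lam : Fin n → ℝ} (hlam : Injective lam) :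
    IsUnit (sepMatrix lam).det := by
  rw [sepMatrix_eq_vandermonde_submatrix, Matrix.det_permute', isUnit_iff_ne_zero]
  exact mul_ne_zero (Int.cast_ne_zero.2 (Units.ne_zero _))
    (Matrix.det_vandermonde_ne_zero_iff.mpr hlam)

theorem hasDerivAt_sum_mul_update_sq {ι : Type*} [Fintype ι] [DecidableEq ι]
    (w mu : ι → ℝ) (p : ι) :
    HasDerivAt (fun t => ∑ i, w i * update mu p t i ^ 2) (2 * w p * mu p) (mu p) := by
  have hsplit : ∀ t, ∑ i, w i * update mu p t i ^ 2
      = w p * t ^ 2 + ∑ i ∈ {p}ᶜ, w i * mu i ^ 2 := by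
    intro t
    rw [Fintype.sum_eq_add_sum_compl p, update_self]
    congr 1
    exact Finset.sum_congr rfl fun i hi => by
      rw [update_of_ne (by simpa using hi)]
  simp only [hsplit]
  exact (((hasDerivAt_pow 2 (mu p)).const_mul (w p)).add_const _).congr_deriv (by ring)

section SepSol

variable {n N : ℕ} {f σ : LaurentPolynomial ℝ} {s : ℕ}
  {H : (Fin n → ℝ) → (Fin n → ℝ) → (Fin N → ℝ) → Fin n → ℝ}

theorem SepSol.sepMatrix_mulVec_sub (hH : SepSol n N f σ s H) {lam : Fin n → ℝ}
    (hlam : lam ∈ Omega n) (mu : Fin n → ℝ) (c : Fin N → ℝ) :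
    sepMatrix lam *ᵥ (H lam mu c - H lam 0 c)
      = fun i => leval f (lam i) * lam i ^ (s : ℤ) * mu i ^ 2 := by
  funext i
  have hmu := hH lam hlam mu c i
  have h0 := hH lam hlam 0 c i
  simp only [Pi.zero_apply, ne_eq, OfNat.ofNat_ne_zero, not_false_eq_true, zero_pow,
    mul_zero] at h0
  simp only [Matrix.mulVec, dotProduct, sepMatrix, Matrix.of_apply, Pi.sub_apply, mul_sub,
    Finset.sum_sub_distrib]
  simp only [mul_comm (H _ _ _ _)] at hmu h0
  linarith

theorem SepSol.eq_add_inv_mulVec (hH : SepSol n N f σ s H) {lam : Fin n → ℝ}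
    (hlam : lam ∈ Omega n) (mu : Fin n → ℝ) (c : Fin N → ℝ) :
    H lam mu c = H lam 0 c
      + (sepMatrix lam)⁻¹ *ᵥ fun i => leval f (lam i) * lam i ^ (s : ℤ) * mu i ^ 2 := by
  rw [← hH.sepMatrix_mulVec_sub hlam, Matrix.mulVec_mulVec,
    Matrix.nonsing_inv_mul _ (isUnit_det_sepMatrix hlam.2), Matrix.one_mulVec, add_sub_cancel]

theorem SepSol.pMu_eq (hH : SepSol n N f σ s H) {lam : Fin n → ℝ} (hlam : lam ∈ Omega n)
    (mu : Fin n → ℝ) (c : Fin N → ℝ) (r p : Fin n) :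
    pMu H lam mu c r p
      = 2 * (sepMatrix lam)⁻¹ r p * (leval f (lam p) * lam p ^ (s : ℤ)) * mu p := by
  set w : Fin n → ℝ := fun i => (sepMatrix lam)⁻¹ r i * (leval f (lam i) * lam i ^ (s : ℤ))
  have hfun : (fun t => H lam (update mu p t) c r)
      = fun t => H lam 0 c r + ∑ i, w i * update mu p t i ^ 2 := by
    funext t
    rw [hH.eq_add_inv_mulVec hlam, Pi.add_apply, Matrix.mulVec, dotProduct]
    exact congrArg _ (Finset.sum_congr rfl fun i _ => by ring)
  rw [pMu, hfun, ((hasDerivAt_sum_mul_update_sq w mu p).const_add _).deriv]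
  ring

end SepSol

theorem Mrs_fst {n N : ℕ} (hn : 1 ≤ n) (r s : ℕ)
    (Hr : (Fin n → ℝ) → (Fin n → ℝ) → (Fin N → ℝ) → Fin n → ℝ) (x : PhaseP n N) :
    (Mrs n N hn r s Hr x).1 = x.1 := rfl

theorem Mrs_snd_fst {n N : ℕ} (hn : 1 ≤ n) (r s : ℕ)
    (Hr : (Fin n → ℝ) → (Fin n → ℝ) → (Fin N → ℝ) → Fin n → ℝ) (x : PhaseP n N) :
    (Mrs n N hn r s Hr x).2.1 = fun i => x.1 i ^ ((r : ℤ) - (s : ℕ)) * x.2.1 i := rfl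

theorem identity_A2_general
    (n N : ℕ) (hn : 1 ≤ n)
    (f σ : LaurentPolynomial ℝ) (s : ℕ)
    (H0 Hs : (Fin n → ℝ) → (Fin n → ℝ) → (Fin N → ℝ) → Fin n → ℝ)
    (hH0 : SepSol n N f σ 0 H0) (hHs : SepSol n N f σ s Hs)
    (lam : Fin n → ℝ) (hlam : lam ∈ Omega n) (mu : Fin n → ℝ) (c : Fin N → ℝ)
    (r p : Fin n) :
    pMu Hs (Mrs n N hn 0 s H0 (lam, mu, c)).1 (Mrs n N hn 0 s H0 (lam, mu, c)).2.1
        (Mrs n N hn 0 s H0 (lam, mu, c)).2.2 r p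
      = pMu H0 lam mu c r p := by
  have hlamp : lam p ≠ 0 := hlam.1 p
  rw [Mrs_fst, Mrs_snd_fst, hHs.pMu_eq hlam, hH0.pMu_eq hlam, Nat.cast_zero, zpow_zero, zero_sub, zpow_neg, zpow_natCast]
  field_simp

/-- identity (A2) of the paper: for `s ∈ {1,…,N}`,
`(∂h_r^{(s)}/∂μ_p)(M_{0→s}(λ, μ, c)) = (∂h_r/∂μ_p)(λ, μ, c)` on `Ω × ℝⁿ × ℝᴺ`. -/
theorem identity_A2
    (n N : ℕ) (hn : 1 ≤ n) (hN1 : 1 ≤ N) (hNn : N ≤ n)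
    (f σ : LaurentPolynomial ℝ) (s : ℕ) (hs1 : 1 ≤ s) (hsN : s ≤ N)
    (H0 Hs : (Fin n → ℝ) → (Fin n → ℝ) → (Fin N → ℝ) → Fin n → ℝ)
    (hH0 : SepSol n N f σ 0 H0) (hHs : SepSol n N f σ s Hs)
    (lam : Fin n → ℝ) (hlam : lam ∈ Omega n) (mu : Fin n → ℝ) (c : Fin N → ℝ)
    (r p : Fin n) :
    pMu Hs (Mrs n N hn 0 s H0 (lam, mu, c)).1 (Mrs n N hn 0 s H0 (lam, mu, c)).2.1
        (Mrs n N hn 0 s H0 (lam, mu, c)).2.2 r p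
      = pMu H0 lam mu c r p :=
  identity_A2_general n N hn f σ s H0 Hs hH0 hHs lam hlam mu c r p
end
end

section
/- (Identity (A3) of the paper.) Let s ∈ {1,…,N}. For every (λ, μ, c) ∈ Ω × ℝⁿ × ℝᴺ, every r ∈ {1,…,n} and every p ∈ {1,…,n}: (∂h_r^{(s)}/∂λ_p)( M_{0→s}(λ, μ, c) ) = λ_p^{−s} (∂h_r/∂λ_p)(λ, μ, c) + s λ_p^{−s−1} μ_p (∂h_r/∂μ_p)(λ, μ, c). -/
open Finset Function

noncomputable section

/-!
On `Ω` the separation relations form a Vandermonde system `V(λ) h = b`. Moving the single node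
`λ_p`, or the single momentum `μ_p`, changes only the `p`-th row, so each such first variation of
`h` is the Lagrange coefficient vector `V(λ)⁻¹ e_p` times the derivative of the defect of that row.
The Miura map `M_{0→s}` merely relabels monomials: at its image the curve-`s` defect in `x` is
`x⁻ˢ` times the curve-`0` defect plus `f(x) (xˢ μ̄_p² - x⁻ˢ μ_p²)`, and differentiating at
`x = λ_p`, where the curve-`0` defect vanishes, gives (A3).
-/

open Filter Topology

section Interpolation

open Matrix

variable {n : ℕ}

def evalDesc (h : Fin n → ℝ) (x : ℝ) : ℝ :=
  ∑ q : Fin n, h q * x ^ ((n : ℤ) - 1 - (q : ℕ))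

lemma evalDesc_eq_sum_pow (h : Fin n → ℝ) (x : ℝ) :
    evalDesc h x = ∑ j : Fin n, h (Fin.rev j) * x ^ (j : ℕ) := by
  rw [evalDesc, ← Equiv.sum_comp Fin.revPerm]
  refine sum_congr rfl fun j _ => ?_
  rw [Fin.revPerm_apply, ← zpow_natCast]
  congr 2
  have := j.isLt
  rw [Fin.val_rev]
  omega

lemma evalDesc_apply_eq_mulVec (h lam : Fin n → ℝ) (i : Fin n) :
    evalDesc h (lam i) = (Matrix.vandermonde lam *ᵥ (h ∘ Fin.rev)) i := by
  simp only [evalDesc_eq_sum_pow, Matrix.mulVec, dotProduct, Matrix.vandermonde_apply,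
    Function.comp_apply, mul_comm]

lemma evalDesc_add (h h' : Fin n → ℝ) (x : ℝ) :
    evalDesc (h + h') x = evalDesc h x + evalDesc h' x := by
  simp only [evalDesc, Pi.add_apply, add_mul, sum_add_distrib]

lemma evalDesc_smul (a : ℝ) (h : Fin n → ℝ) (x : ℝ) : evalDesc (a • h) x = a * evalDesc h x := by
  simp only [evalDesc, Pi.smul_apply, smul_eq_mul, mul_sum, mul_assoc]

lemma differentiable_evalDesc (h : Fin n → ℝ) : Differentiable ℝ (evalDesc h) := by
  have : evalDesc h = fun x => ∑ j : Fin n, h (Fin.rev j) * x ^ (j : ℕ) :=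
    funext (evalDesc_eq_sum_pow h)
  rw [this]
  fun_prop

lemma eq_of_forall_evalDesc_eq {lam : Fin n → ℝ} (hlam : Injective lam) {h h' : Fin n → ℝ}
    (heq : ∀ i, evalDesc h (lam i) = evalDesc h' (lam i)) : h = h' := by
  have hunit : IsUnit (Matrix.vandermonde lam) := (Matrix.isUnit_iff_isUnit_det _).mpr
    (Matrix.det_vandermonde_ne_zero_iff.mpr hlam).isUnit
  have hrev : h ∘ Fin.rev = h' ∘ Fin.rev :=
    Matrix.mulVec_injective_iff_isUnit.mpr hunit <| funext fun i => by
      rw [← evalDesc_apply_eq_mulVec, ← evalDesc_apply_eq_mulVec, heq]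
  funext q
  simpa using congrFun hrev (Fin.rev q)

-- `evalDesc` lists coefficients by descending powers, hence the `Fin.rev`.
def lagrangeCoeffs (lam : Fin n → ℝ) (p : Fin n) : Fin n → ℝ :=
  fun q => ((Matrix.vandermonde lam)⁻¹ *ᵥ Pi.single p 1) (Fin.rev q)

lemma evalDesc_lagrangeCoeffs {lam : Fin n → ℝ} (hlam : Injective lam) (p i : Fin n) :
    evalDesc (lagrangeCoeffs lam p) (lam i) = (Pi.single p 1 : Fin n → ℝ) i := by
  have hdet : IsUnit (Matrix.vandermonde lam).det :=
    (Matrix.det_vandermonde_ne_zero_iff.mpr hlam).isUnit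
  have : lagrangeCoeffs lam p ∘ Fin.rev = (Matrix.vandermonde lam)⁻¹ *ᵥ Pi.single p 1 := by
    funext q
    simp [lagrangeCoeffs]
  rw [evalDesc_apply_eq_mulVec, this, Matrix.mulVec_mulVec, Matrix.mul_nonsing_inv _ hdet,
    Matrix.one_mulVec]

lemma hasDerivAt_apply_of_evalDesc_update {h : ℝ → Fin n → ℝ} {ℓ R : ℝ → ℝ}
    {lam : Fin n → ℝ} {p : Fin n} {t₀ R' : ℝ}
    (hℓ : DifferentiableAt ℝ ℓ t₀) (hℓ₀ : ℓ t₀ = lam p)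
    (hinj : ∀ᶠ t in 𝓝 t₀, Injective (update lam p (ℓ t)))
    (hrows : ∀ᶠ t in 𝓝 t₀, ∀ i ≠ p, evalDesc (h t) (lam i) = evalDesc (h t₀) (lam i))
    (hrow : ∀ᶠ t in 𝓝 t₀, evalDesc (h t) (ℓ t) - evalDesc (h t₀) (ℓ t) = R t)
    (hR : HasDerivAt R R' t₀) (q : Fin n) :
    HasDerivAt (fun t => h t q) (R' * lagrangeCoeffs lam p q) t₀ := by
  have hlam : Injective lam := by simpa [hℓ₀] using hinj.self_of_nhds
  set u := lagrangeCoeffs lam p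
  have hu : ∀ i, evalDesc u (lam i) = (Pi.single p 1 : Fin n → ℝ) i :=
    evalDesc_lagrangeCoeffs hlam p
  set ρ := fun t => evalDesc u (ℓ t)
  have hρ : HasDerivAt ρ (deriv ρ t₀) t₀ :=
    ((differentiable_evalDesc u).differentiableAt.comp t₀ hℓ).hasDerivAt
  have hρ₀ : ρ t₀ = 1 := by simp [ρ, hℓ₀, hu]
  have hR₀ : R t₀ = 0 := by simpa using hrow.self_of_nhds.symm
  have hρne : ∀ᶠ t in 𝓝 t₀, ρ t ≠ 0 := hρ.continuousAt.eventually_ne (by simp [hρ₀])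
  -- Only the `p`-th row of the system changes, and `u` interpolates `Pi.single p 1`.
  have hsol : ∀ᶠ t in 𝓝 t₀, h t q = h t₀ q + R t / ρ t * u q := by
    filter_upwards [hinj, hrows, hrow, hρne] with t hinj_t hrows_t hrow_t hρ_t
    have : h t = h t₀ + (R t / ρ t) • u := by
      refine eq_of_forall_evalDesc_eq hinj_t fun i => ?_
      rw [evalDesc_add, evalDesc_smul]
      rcases eq_or_ne i p with rfl | hi
      · simp only [update_self, ρ] at hρ_t ⊢
        field_simp
        linarith
      · simp only [update_of_ne hi, hu, Pi.single_eq_of_ne hi, hrows_t i hi]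
        ring
    rw [this, Pi.add_apply, Pi.smul_apply, smul_eq_mul]
  have hderiv : HasDerivAt (fun t => h t₀ q + R t / ρ t * u q) (R' * u q) t₀ := by
    have key := ((hR.div hρ (by simp [hρ₀])).mul_const (u q)).const_add (h t₀ q)
    rwa [hR₀, hρ₀, zero_mul, sub_zero, mul_one, one_pow, div_one] at key
  exact hderiv.congr_of_eventuallyEq hsol

end Interpolation

lemma differentiableAt_leval (p : LaurentPolynomial ℝ) {x : ℝ} (hx : x ≠ 0) :
    DifferentiableAt ℝ (leval p) x := by
  have : leval p = fun y => ∑ k ∈ p.coeff.support, p.coeff k * y ^ k := rfl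
  rw [this]
  fun_prop (disch := exact Or.inl hx)

lemma isOpen_Omega (n : ℕ) : IsOpen (Omega n) := by
  have : Omega n =
      (⋂ i, {lam | lam i ≠ 0}) ∩ ⋂ i, ⋂ j, ⋂ (_ : i ≠ j), {lam | lam i ≠ lam j} := by
    ext lam
    simp [Omega, Injective, not_imp_not]
  rw [this]
  refine (isOpen_iInter_of_finite fun i =>
    isOpen_ne_fun (continuous_apply i) continuous_const).inter
    (isOpen_iInter_of_finite fun i => isOpen_iInter_of_finite fun j => isOpen_iInter_of_finite
      fun _ => isOpen_ne_fun (continuous_apply i) (continuous_apply j))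

lemma eventually_update_mem_Omega {n : ℕ} {lam : Fin n → ℝ} (hlam : lam ∈ Omega n) (p : Fin n) :
    ∀ᶠ t in 𝓝 (lam p), update lam p t ∈ Omega n :=
  (continuous_const.update p continuous_id).continuousAt.preimage_mem_nhds
    ((isOpen_Omega n).mem_nhds (by simpa using hlam))

section Separation

variable {n N : ℕ} (f σ : LaurentPolynomial ℝ) (s : ℕ)

def sepLHS (c : Fin N → ℝ) (h : Fin n → ℝ) (x : ℝ) : ℝ :=
  leval σ x * x ^ (-(s : ℤ))
    + (∑ j : Fin N,
        if s ≤ (j : ℕ) then c j * x ^ ((n : ℤ) + (j : ℕ) - (s : ℕ))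
        else c j * x ^ (((j : ℕ) : ℤ) - (s : ℕ)))
    + evalDesc h x

def sepDefect (c : Fin N → ℝ) (h : Fin n → ℝ) (m x : ℝ) : ℝ :=
  leval f x * x ^ (s : ℤ) * m ^ 2 - sepLHS σ s c h x

lemma sepDefect_sub_sepDefect (c : Fin N → ℝ) (h h' : Fin n → ℝ) (m x : ℝ) :
    sepDefect f σ s c h m x - sepDefect f σ s c h' m x = evalDesc h' x - evalDesc h x := by
  simp only [sepDefect, sepLHS]
  ring

lemma differentiableAt_sepDefect (c : Fin N → ℝ) (h : Fin n → ℝ) (m : ℝ) {x : ℝ} (hx : x ≠ 0) :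
    DifferentiableAt ℝ (sepDefect f σ s c h m) x := by
  have hf := differentiableAt_leval f hx
  have hσ := differentiableAt_leval σ hx
  have hv := (differentiable_evalDesc h).differentiableAt (x := x)
  have hcas : DifferentiableAt ℝ (fun y => ∑ j : Fin N,
      if s ≤ (j : ℕ) then c j * y ^ ((n : ℤ) + (j : ℕ) - (s : ℕ))
      else c j * y ^ (((j : ℕ) : ℤ) - (s : ℕ))) x :=
    DifferentiableAt.fun_sum fun j _ => by split_ifs <;> fun_prop (disch := exact Or.inl hx)
  unfold sepDefect sepLHS
  fun_prop (disch := exact Or.inl hx)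

lemma hasDerivAt_sepDefect_mu (c : Fin N → ℝ) (h : Fin n → ℝ) (m x : ℝ) :
    HasDerivAt (fun m => sepDefect f σ s c h m x) (leval f x * x ^ (s : ℤ) * (2 * m)) m :=
  (((hasDerivAt_pow 2 m).const_mul (leval f x * x ^ (s : ℤ))).sub_const
    (sepLHS σ s c h x)).congr_deriv (by ring)

variable {f σ s}

variable {H : (Fin n → ℝ) → (Fin n → ℝ) → (Fin N → ℝ) → Fin n → ℝ}

lemma SepSol.sepDefect_eq_zero (hH : SepSol n N f σ s H) {lam : Fin n → ℝ} (hlam : lam ∈ Omega n)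
    (mu : Fin n → ℝ) (c : Fin N → ℝ) (i : Fin n) :
    sepDefect f σ s c (H lam mu c) (mu i) (lam i) = 0 :=
  sub_eq_zero.mpr (hH lam hlam mu c i).symm

lemma SepSol.eq_of_sepDefect_eq_zero (hH : SepSol n N f σ s H) {lam : Fin n → ℝ}
    (hlam : lam ∈ Omega n) {mu : Fin n → ℝ} {c : Fin N → ℝ} {h : Fin n → ℝ}
    (hh : ∀ i, sepDefect f σ s c h (mu i) (lam i) = 0) : H lam mu c = h :=
  eq_of_forall_evalDesc_eq hlam.2 fun i => by
    linarith [sepDefect_sub_sepDefect f σ s c (H lam mu c) h (mu i) (lam i),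
      hH.sepDefect_eq_zero hlam mu c i, hh i]

lemma SepSol.hasDerivAt_lam (hH : SepSol n N f σ s H) {lam : Fin n → ℝ} (hlam : lam ∈ Omega n)
    (mu : Fin n → ℝ) (c : Fin N → ℝ) (p r : Fin n) :
    HasDerivAt (fun t => H (update lam p t) mu c r)
      (deriv (sepDefect f σ s c (H lam mu c) (mu p)) (lam p) * lagrangeCoeffs lam p r)
      (lam p) := by
  have hΩ := eventually_update_mem_Omega hlam p
  refine hasDerivAt_apply_of_evalDesc_update differentiableAt_id rfl ?_ ?_ ?_
    (differentiableAt_sepDefect f σ s c _ _ (hlam.1 p)).hasDerivAt r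
  · filter_upwards [hΩ] with t ht using ht.2
  · filter_upwards [hΩ] with t ht i hi
    have := hH.sepDefect_eq_zero ht mu c i
    rw [update_of_ne hi] at this
    rw [update_eq_self]
    linarith [hH.sepDefect_eq_zero hlam mu c i,
      sepDefect_sub_sepDefect f σ s c (H (update lam p t) mu c) (H lam mu c) (mu i) (lam i)]
  · filter_upwards [hΩ] with t ht
    have := hH.sepDefect_eq_zero ht mu c p
    rw [update_self] at this
    simp only [update_eq_self, id]
    linarith [sepDefect_sub_sepDefect f σ s c (H (update lam p t) mu c) (H lam mu c) (mu p) t]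

lemma SepSol.hasDerivAt_mu (hH : SepSol n N f σ s H) {lam : Fin n → ℝ} (hlam : lam ∈ Omega n)
    (mu : Fin n → ℝ) (c : Fin N → ℝ) (p r : Fin n) :
    HasDerivAt (fun t => H lam (update mu p t) c r)
      (leval f (lam p) * lam p ^ (s : ℤ) * (2 * mu p) * lagrangeCoeffs lam p r) (mu p) := by
  refine hasDerivAt_apply_of_evalDesc_update (ℓ := fun _ => lam p) (differentiableAt_const _) rfl
    ?_ ?_ ?_ (hasDerivAt_sepDefect_mu f σ s c (H lam mu c) (mu p) (lam p)) r
  · simpa using hlam.2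
  · refine Eventually.of_forall fun t i hi => ?_
    have := hH.sepDefect_eq_zero hlam (update mu p t) c i
    rw [update_of_ne hi] at this
    rw [update_eq_self]
    linarith [hH.sepDefect_eq_zero hlam mu c i,
      sepDefect_sub_sepDefect f σ s c (H lam (update mu p t) c) (H lam mu c) (mu i) (lam i)]
  · refine Eventually.of_forall fun t => ?_
    have := hH.sepDefect_eq_zero hlam (update mu p t) c p
    rw [update_self] at this
    simp only [update_eq_self]
    linarith [sepDefect_sub_sepDefect f σ s c (H lam (update mu p t) c) (H lam mu c) t (lam p)]

end Separation

section Miura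

variable {n N : ℕ} (s : ℕ)

def miuraCasimirs (hn : 1 ≤ n) (c : Fin N → ℝ) (h : Fin n → ℝ) : Fin N → ℝ :=
  fun j => if (j : ℕ) < s then h ⟨n - 1 - j, by omega⟩ else c j

def shiftCoeffs (hsN : s ≤ N) (c : Fin N → ℝ) (h : Fin n → ℝ) : Fin n → ℝ :=
  fun q => if hq : (q : ℕ) < s then c ⟨s - 1 - q, by omega⟩ else h ⟨q - s, by omega⟩

lemma Mrs_zero (hn : 1 ≤ n) (H : (Fin n → ℝ) → (Fin n → ℝ) → (Fin N → ℝ) → Fin n → ℝ)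
    (lam mu : Fin n → ℝ) (c : Fin N → ℝ) :
    Mrs n N hn 0 s H (lam, mu, c)
      = (lam, fun i => lam i ^ (-(s : ℤ)) * mu i, miuraCasimirs s hn c (H lam mu c)) := by
  simp only [Mrs, Nat.cast_zero, zero_sub, zero_le, true_and, Prod.mk.injEq]
  funext j
  simp only [miuraCasimirs]
  split_ifs
  · congr 2
    omega
  · rfl

lemma sum_miuraCasimirs_add_sum_shiftCoeffs (hsN : s ≤ N) (hsn : s ≤ n) (hn : 1 ≤ n)
    (c : Fin N → ℝ) (h : Fin n → ℝ) (x : ℝ) :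
    (∑ j : Fin N,
        if s ≤ (j : ℕ) then miuraCasimirs s hn c h j * x ^ ((n : ℤ) + (j : ℕ) - (s : ℕ))
        else miuraCasimirs s hn c h j * x ^ (((j : ℕ) : ℤ) - (s : ℕ)))
      + ∑ q : Fin n, shiftCoeffs s hsN c h q * x ^ ((n : ℤ) - 1 - (q : ℕ))
      = ∑ j : Fin N, c j * x ^ ((n : ℤ) + (j : ℕ) - (s : ℕ))
        + ∑ q : Fin n, h q * x ^ ((n : ℤ) - 1 - (q : ℕ) - (s : ℕ)) := by
  let e : Fin N ⊕ Fin n → Fin N ⊕ Fin n := Sum.elim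
    (fun j => if s ≤ (j : ℕ) then .inl j else .inr ⟨n - 1 - j, by omega⟩)
    (fun q => if hq : (q : ℕ) < s then .inl ⟨s - 1 - q, by omega⟩ else .inr ⟨q - s, by omega⟩)
  have he : Injective e := by
    rintro (j | q) (j' | q') hee <;> simp only [e, Sum.elim_inl, Sum.elim_inr] at hee <;>
      split_ifs at hee <;>
      simp only [Sum.inl.injEq, Sum.inr.injEq, reduceCtorEq, Fin.ext_iff] at hee ⊢ <;> omega
  rw [← Fintype.sum_sumElim, ← Fintype.sum_sumElim]
  refine Fintype.sum_bijective e (Finite.injective_iff_bijective.mp he) _ _ ?_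
  rintro (j | q)
  · by_cases hj : s ≤ (j : ℕ)
    · simp [e, hj, miuraCasimirs, show ¬ (j : ℕ) < s by omega]
    · simp only [e, Sum.elim_inl, hj, if_false, Sum.elim_inr, miuraCasimirs,
        show (j : ℕ) < s by omega, if_true]
      congr 2
      omega
  · by_cases hq : (q : ℕ) < s
    · simp only [e, Sum.elim_inr, hq, dif_pos, Sum.elim_inl, shiftCoeffs]
      congr 2
      omega
    · simp only [e, Sum.elim_inr, hq, dif_neg, not_false_eq_true, shiftCoeffs]
      congr 2
      omega

variable (f σ : LaurentPolynomial ℝ)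

lemma sepLHS_miura (hsN : s ≤ N) (hsn : s ≤ n) (hn : 1 ≤ n) (c : Fin N → ℝ) (h : Fin n → ℝ)
    {x : ℝ} (hx : x ≠ 0) :
    sepLHS σ s (miuraCasimirs s hn c h) (shiftCoeffs s hsN c h) x
      = x ^ (-(s : ℤ)) * sepLHS σ 0 c h x := by
  have hshift : ∀ k : ℤ, x ^ (k - s) = x ^ (-(s : ℤ)) * x ^ k := fun k => by
    rw [← zpow_add₀ hx, neg_add_eq_sub]
  simp only [sepLHS, evalDesc, add_assoc, sum_miuraCasimirs_add_sum_shiftCoeffs s hsN hsn hn c h x]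
  simp only [Nat.cast_zero, neg_zero, zpow_zero, mul_one, sub_zero, zero_le, if_true, hshift,
    mul_add, mul_sum, mul_left_comm _ (x ^ (-(s : ℤ)))]
  ring

lemma sepDefect_miura (hsN : s ≤ N) (hsn : s ≤ n) (hn : 1 ≤ n) (c : Fin N → ℝ) (h : Fin n → ℝ)
    (m m' : ℝ) {x : ℝ} (hx : x ≠ 0) :
    sepDefect f σ s (miuraCasimirs s hn c h) (shiftCoeffs s hsN c h) m' x
      = x ^ (-(s : ℤ)) * sepDefect f σ 0 c h m x
        + leval f x * (x ^ (s : ℤ) * m' ^ 2 - x ^ (-(s : ℤ)) * m ^ 2) := by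
  simp only [sepDefect, sepLHS_miura s σ hsN hsn hn c h hx, Nat.cast_zero, zpow_zero]
  ring

lemma hasDerivAt_sepDefect_miura (hsN : s ≤ N) (hsn : s ≤ n) (hn : 1 ≤ n) (c : Fin N → ℝ)
    (h : Fin n → ℝ) {m L D' : ℝ} (hL : L ≠ 0) (hD : HasDerivAt (sepDefect f σ 0 c h m) D' L)
    (hD₀ : sepDefect f σ 0 c h m L = 0) :
    HasDerivAt
      (sepDefect f σ s (miuraCasimirs s hn c h) (shiftCoeffs s hsN c h) (L ^ (-(s : ℤ)) * m))
      (L ^ (-(s : ℤ)) * D' + s * L ^ (-(s : ℤ) - 1) * m * (2 * leval f L * m)) L := by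
  have hf := (differentiableAt_leval f hL).hasDerivAt
  have hpos := hasDerivAt_zpow (s : ℤ) L (Or.inl hL)
  have hneg := hasDerivAt_zpow (-(s : ℤ)) L (Or.inl hL)
  refine (((hneg.mul hD).add (hf.mul ((hpos.mul_const ((L ^ (-(s : ℤ)) * m) ^ 2)).sub
    (hneg.mul_const (m ^ 2))))).congr_deriv ?_).congr_of_eventuallyEq ?_
  · simp only [hD₀, Pi.sub_apply, zpow_neg, zpow_sub₀ hL, zpow_one, zpow_natCast]
    field_simp
    push_cast
    ring
  · filter_upwards [eventually_ne_nhds hL] with x hx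
    exact sepDefect_miura s f σ hsN hsn hn c h m _ hx

variable {f σ s} {H₀ Hₛ : (Fin n → ℝ) → (Fin n → ℝ) → (Fin N → ℝ) → Fin n → ℝ}

lemma SepSol.eq_shiftCoeffs (hHₛ : SepSol n N f σ s Hₛ) (hH₀ : SepSol n N f σ 0 H₀)
    (hsN : s ≤ N) (hsn : s ≤ n) (hn : 1 ≤ n) {lam : Fin n → ℝ} (hlam : lam ∈ Omega n)
    (mu : Fin n → ℝ) (c : Fin N → ℝ) :
    Hₛ lam (fun i => lam i ^ (-(s : ℤ)) * mu i) (miuraCasimirs s hn c (H₀ lam mu c))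
      = shiftCoeffs s hsN c (H₀ lam mu c) := by
  refine hHₛ.eq_of_sepDefect_eq_zero hlam fun i => ?_
  have hx := hlam.1 i
  have hinv : lam i ^ (s : ℤ) * lam i ^ (-(s : ℤ)) = 1 := by
    rw [← zpow_add₀ hx, add_neg_cancel, zpow_zero]
  rw [sepDefect_miura s f σ hsN hsn hn c _ (mu i) _ hx, hH₀.sepDefect_eq_zero hlam mu c i]
  linear_combination leval f (lam i) * lam i ^ (-(s : ℤ)) * mu i ^ 2 * hinv

end Miura

theorem identity_A3_general
    (n N : ℕ) (hn : 1 ≤ n) (hNn : N ≤ n)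
    (f σ : LaurentPolynomial ℝ) (s : ℕ) (hsN : s ≤ N)
    (H0 Hs : (Fin n → ℝ) → (Fin n → ℝ) → (Fin N → ℝ) → Fin n → ℝ)
    (hH0 : SepSol n N f σ 0 H0) (hHs : SepSol n N f σ s Hs)
    (lam : Fin n → ℝ) (hlam : lam ∈ Omega n) (mu : Fin n → ℝ) (c : Fin N → ℝ)
    (r p : Fin n) :
    pLam Hs (Mrs n N hn 0 s H0 (lam, mu, c)).1 (Mrs n N hn 0 s H0 (lam, mu, c)).2.1
        (Mrs n N hn 0 s H0 (lam, mu, c)).2.2 r p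
      = lam p ^ (-(s : ℤ)) * pLam H0 lam mu c r p
        + (s : ℝ) * lam p ^ (-(s : ℤ) - 1) * mu p * pMu H0 lam mu c r p := by
  have hsn : s ≤ n := hsN.trans hNn
  have hD₀ := (differentiableAt_sepDefect f σ 0 c (H0 lam mu c) (mu p) (hlam.1 p)).hasDerivAt
  rw [Mrs_zero, pLam, pLam, pMu, (hHs.hasDerivAt_lam hlam _ _ p r).deriv,
    (hH0.hasDerivAt_lam hlam mu c p r).deriv, (hH0.hasDerivAt_mu hlam mu c p r).deriv,
    hHs.eq_shiftCoeffs hH0 hsN hsn hn hlam mu c,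
    (hasDerivAt_sepDefect_miura s f σ hsN hsn hn c _ (hlam.1 p) hD₀
      (hH0.sepDefect_eq_zero hlam mu c p)).deriv]
  simp only [Nat.cast_zero, zpow_zero, mul_one]
  ring

/-- identity (A3) of the paper: for `s ∈ {1,…,N}`,
`(∂h_r^{(s)}/∂λ_p)(M_{0→s}(λ, μ, c))
  = λ_p^{-s} (∂h_r/∂λ_p)(λ, μ, c) + s λ_p^{-s-1} μ_p (∂h_r/∂μ_p)(λ, μ, c)`
on `Ω × ℝⁿ × ℝᴺ`. -/
theorem identity_A3
    (n N : ℕ) (hn : 1 ≤ n) (hN1 : 1 ≤ N) (hNn : N ≤ n)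
    (f σ : LaurentPolynomial ℝ) (s : ℕ) (hs1 : 1 ≤ s) (hsN : s ≤ N)
    (H0 Hs : (Fin n → ℝ) → (Fin n → ℝ) → (Fin N → ℝ) → Fin n → ℝ)
    (hH0 : SepSol n N f σ 0 H0) (hHs : SepSol n N f σ s Hs)
    (lam : Fin n → ℝ) (hlam : lam ∈ Omega n) (mu : Fin n → ℝ) (c : Fin N → ℝ)
    (r p : Fin n) :
    pLam Hs (Mrs n N hn 0 s H0 (lam, mu, c)).1 (Mrs n N hn 0 s H0 (lam, mu, c)).2.1
        (Mrs n N hn 0 s H0 (lam, mu, c)).2.2 r p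
      = lam p ^ (-(s : ℤ)) * pLam H0 lam mu c r p
        + (s : ℝ) * lam p ^ (-(s : ℤ) - 1) * mu p * pMu H0 lam mu c r p :=
  identity_A3_general n N hn hNn f σ s hsN H0 Hs hH0 hHs lam hlam mu c r p
end
end
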